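/- Lemma 2.9 (per-edge characterization of discrete conformal vector fields, spherical case). Let γ_i, γ_j : ℝ → ℝ³ be curves with ‖γ_i(t)‖ = 1 and ‖γ_j(t)‖ = 1 for all t, differentiable at t = 0 with derivatives ξ_i := γ_i′(0) and ξ_j := γ_j′(0). Set p_i := γ_i(0), p_j := γ_j(0), assume −1 < ⟨p_i, p_j⟩ < 1, set λ_0 := arccos⟨p_i,p_j⟩, and let u_i, u_j ∈ ℝ. Then the spherical edge length function t ↦ arccos⟨γ_i(t), γ_j(t)⟩ has derivative (u_i + u_j)·tan(λ_0/2) at t = 0 if and only if ⟨ξ_j − ξ_i, p_j − p_i⟩ = ((u_i + u_j)/2)·‖p_j − p_i‖². -/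

import Mathlib

/-!
Differentiating `‖γ‖² = 1` shows that the velocities are tangent, `⟪ξ, γ⟫ = 0`, so
`⟪ξ_j - ξ_i, p_j - p_i⟫ = -(⟪p_i, ξ_j⟫ + ⟪ξ_i, p_j⟫)` is minus the derivative of `c = ⟪γ_i, γ_j⟫`,
while `‖p_j - p_i‖² = 2 - 2c`. The edge length `arccos c` has derivative
`-(⟪p_i, ξ_j⟫ + ⟪ξ_i, p_j⟫) / √(1 - c²)`, and the half-angle formula gives
`tan (arccos c / 2) = (1 - c) / √(1 - c²)`; clearing the common positive denominator turns the
derivative condition into the inner-product condition.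
-/

noncomputable section

/-- Standard inner product on `ℝ³`. -/
def dot3 (x y : Fin 3 → ℝ) : ℝ := x 0 * y 0 + x 1 * y 1 + x 2 * y 2

/-- Euclidean norm on `ℝ³`. -/
def norm3 (x : Fin 3 → ℝ) : ℝ := Real.sqrt (dot3 x x)

open Real
open scoped RealInnerProductSpace

theorem HasDerivAt.hasDerivAt_iff_eq {𝕜 F : Type*} [NontriviallyNormedField 𝕜]
    [NormedAddCommGroup F] [NormedSpace 𝕜 F] {f : 𝕜 → F} {f' g' : F} {x : 𝕜}
    (hf : HasDerivAt f f' x) : HasDerivAt f g' x ↔ g' = f' :=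
  ⟨fun hg => hg.unique hf, fun h => h ▸ hf⟩

-- Valid for every `x`: where `cos (x / 2) = 0` both sides are `0` by the convention `a / 0 = 0`.
theorem Real.tan_half_eq_one_sub_cos_div_sin (x : ℝ) : tan (x / 2) = (1 - cos x) / sin x := by
  obtain ⟨y, rfl⟩ : ∃ y, x = 2 * y := ⟨x / 2, by ring⟩
  rw [mul_div_cancel_left₀ y two_ne_zero, tan_eq_sin_div_cos, cos_two_mul, sin_two_mul, cos_sq']
  rcases eq_or_ne (sin y) 0 with h | h
  · simp [h]
  · field_simp
    ring

theorem Real.tan_half_arccos {c : ℝ} (h₁ : -1 ≤ c) (h₂ : c ≤ 1) :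
    tan (arccos c / 2) = (1 - c) / √(1 - c ^ 2) := by
  rw [tan_half_eq_one_sub_cos_div_sin, cos_arccos h₁ h₂, sin_arccos]

theorem hasDerivAt_toLp_comp {ι : Type*} [Fintype ι] {γ : ℝ → ι → ℝ} {ξ : ι → ℝ} {t₀ : ℝ}
    (hd : HasDerivAt γ ξ t₀) :
    HasDerivAt (fun t => WithLp.toLp 2 (γ t)) (WithLp.toLp 2 ξ) t₀ :=
  (PiLp.hasFDerivAt_toLp 2 (γ t₀)).comp_hasDerivAt t₀ hd

section InnerProductSpace

variable {E : Type*} [NormedAddCommGroup E] [InnerProductSpace ℝ E]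

theorem inner_eq_zero_of_hasDerivAt_of_norm_eq {γ : ℝ → E} {ξ : E} {t₀ r : ℝ}
    (hγ : ∀ t, ‖γ t‖ = r) (hd : HasDerivAt γ ξ t₀) : ⟪ξ, γ t₀⟫ = 0 := by
  have hconst : HasDerivAt (‖γ ·‖ ^ 2) 0 t₀ := by
    simpa only [hγ] using hasDerivAt_const t₀ (r ^ 2)
  have := hd.norm_sq.unique hconst
  rw [real_inner_comm]
  linarith

theorem hasDerivAt_arccos_inner {γi γj : ℝ → E} {ξi ξj : E} {t₀ : ℝ}
    (hdi : HasDerivAt γi ξi t₀) (hdj : HasDerivAt γj ξj t₀)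
    (hlow : -1 < ⟪γi t₀, γj t₀⟫) (hhigh : ⟪γi t₀, γj t₀⟫ < 1) :
    HasDerivAt (fun t => arccos ⟪γi t, γj t⟫)
      (-(⟪γi t₀, ξj⟫ + ⟪ξi, γj t₀⟫) / √(1 - ⟪γi t₀, γj t₀⟫ ^ 2)) t₀ := by
  have := (hasDerivAt_arccos hlow.ne' hhigh.ne).comp t₀ (hdi.inner ℝ hdj)
  exact this.congr_deriv (by ring)

theorem hasDerivAt_arccos_inner_eq_mul_tan_iff {γi γj : ℝ → E} {ξi ξj : E} {t₀ : ℝ}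
    (hγi : ∀ t, ‖γi t‖ = 1) (hγj : ∀ t, ‖γj t‖ = 1)
    (hdi : HasDerivAt γi ξi t₀) (hdj : HasDerivAt γj ξj t₀)
    (hlow : -1 < ⟪γi t₀, γj t₀⟫) (hhigh : ⟪γi t₀, γj t₀⟫ < 1) (u : ℝ) :
    HasDerivAt (fun t => arccos ⟪γi t, γj t⟫) (u * tan (arccos ⟪γi t₀, γj t₀⟫ / 2)) t₀ ↔
      ⟪ξj - ξi, γj t₀ - γi t₀⟫ = u / 2 * ‖γj t₀ - γi t₀‖ ^ 2 := by
  have hA := hasDerivAt_arccos_inner hdi hdj hlow hhigh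
  set c := ⟪γi t₀, γj t₀⟫
  have hs : 0 < √(1 - c ^ 2) := sqrt_pos.2 (by nlinarith)
  have hinner : ⟪ξj - ξi, γj t₀ - γi t₀⟫ = -(⟪γi t₀, ξj⟫ + ⟪ξi, γj t₀⟫) := by
    have hi := inner_eq_zero_of_hasDerivAt_of_norm_eq hγi hdi
    have hj := inner_eq_zero_of_hasDerivAt_of_norm_eq hγj hdj
    simp only [inner_sub_left, inner_sub_right, hi, hj, real_inner_comm ξj]
    ring
  have hnorm : ‖γj t₀ - γi t₀‖ ^ 2 = 2 - 2 * c := by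
    rw [norm_sub_sq_real, hγi, hγj, real_inner_comm]
    ring
  rw [hA.hasDerivAt_iff_eq, tan_half_arccos hlow.le hhigh.le, hinner, hnorm, ← mul_div_assoc,
    div_left_inj' hs.ne']
  constructor <;> intro h <;> linarith

end InnerProductSpace

theorem dot3_eq_inner (x y : Fin 3 → ℝ) :
    dot3 x y = ⟪WithLp.toLp 2 x, WithLp.toLp 2 y⟫ := by
  simp [dot3, PiLp.inner_apply, Fin.sum_univ_three, mul_comm]

theorem norm3_eq_norm (x : Fin 3 → ℝ) : norm3 x = ‖WithLp.toLp 2 x‖ := by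
  rw [norm3, dot3_eq_inner, real_inner_self_eq_norm_sq, sqrt_sq (norm_nonneg _)]

theorem sph_discrete_conformal_char
    (γi γj : ℝ → Fin 3 → ℝ)
    (hγi : ∀ t, norm3 (γi t) = 1) (hγj : ∀ t, norm3 (γj t) = 1)
    (ξi ξj : Fin 3 → ℝ)
    (hdi : HasDerivAt γi ξi 0) (hdj : HasDerivAt γj ξj 0)
    (hlow : -1 < dot3 (γi 0) (γj 0)) (hhigh : dot3 (γi 0) (γj 0) < 1)
    (ui uj : ℝ) :
    HasDerivAt (fun t => Real.arccos (dot3 (γi t) (γj t)))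
        ((ui + uj) * Real.tan (Real.arccos (dot3 (γi 0) (γj 0)) / 2)) 0 ↔
      dot3 (ξj - ξi) (γj 0 - γi 0)
        = ((ui + uj) / 2) * norm3 (γj 0 - γi 0) ^ 2 := by
  simp only [dot3_eq_inner, norm3_eq_norm, WithLp.toLp_sub] at hγi hγj hlow hhigh ⊢
  exact hasDerivAt_arccos_inner_eq_mul_tan_iff hγi hγj (hasDerivAt_toLp_comp hdi)
    (hasDerivAt_toLp_comp hdj) hlow hhigh _
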